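/- arXiv:1806.04988 — 4 statements merged into one kernel-verified Lean document; each statement's English description precedes it below -/
import Mathlib

section
/- Let k ≥ 4 be an integer and let c ≥ k(1 - (3/2)e^{-k}). If x ∈ [0,1] is the largest solution of x = (1 - e^{-cx})^{k-1}, and x is positive, then x ≥ 1 - (3k/2) e^{-c}. -/
/-!
Write `t = 1 - (3k/2) e^{-c}` and `f y = (1 - e^{-cy})^{k-1}`; only `t > 0` needs an argument.
Since `f 1 ≤ 1`, the intermediate value theorem gives a fixed point of `f` in `[t, 1]` as soon as
`t ≤ f t`, and the largest fixed point `x` dominates it. By Bernoulli's inequality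
`f t ≥ 1 - (k-1) e^{-ct}`, and `e^{-ct} = e^{-c} e^B` with `B = (3k/2) c e^{-c}`. The hypothesis on
`c` gives `c ≥ 35k/36`, and as `y e^{-y}` decreases for `y ≥ 1` this forces `B ≤ 2/k`, so
`(k-1) e^B ≤ (k-1) k/(k-2) ≤ 3k/2`, which is `t ≤ f t`.
-/

open Real Set

lemma fiftyFour_le_exp_four : (54 : ℝ) ≤ exp 4 := by
  have h : exp 4 = exp 1 ^ 4 := by rw [← exp_nat_mul]; norm_num
  rw [h]
  calc (54 : ℝ) ≤ 2.7182818283 ^ 4 := by norm_num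
    _ ≤ exp 1 ^ 4 := pow_le_pow_left₀ (by norm_num) exp_one_gt_d9.le 4

lemma fortyEight_le_exp_thirtyFive_div_nine : (48 : ℝ) ≤ exp (35 / 9) := by
  have h : exp (35 / 9) = exp 4 * exp (-(1 / 9)) := by rw [← exp_add]; norm_num
  have h₁ : 8 / 9 ≤ exp (-(1 / 9)) := by linarith [add_one_le_exp (-(1 / 9))]
  rw [h]
  nlinarith [fiftyFour_le_exp_four]

lemma mul_exp_neg_le_mul_exp_neg {a b : ℝ} (ha : 1 ≤ a) (hab : a ≤ b) :
    b * exp (-b) ≤ a * exp (-a) := by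
  have hb : b ≤ a * exp (b - a) := by nlinarith [add_one_le_exp (b - a)]
  calc b * exp (-b) ≤ a * exp (b - a) * exp (-b) := by gcongr
    _ = a * exp (-a) := by rw [mul_assoc, ← exp_add]; ring_nf

lemma cube_mul_exp_neg_le {k : ℝ} (hk : 4 ≤ k) :
    k ^ 3 * exp (-(35 / 36 * k)) ≤ 64 * exp (-(35 / 9)) := by
  -- `k³ e^{-35k/36}` is a multiple of the cube of `y e^{-y}` at `y = 35k/108 ≥ 35/27`.
  have h := mul_exp_neg_le_mul_exp_neg (a := 35 / 27) (b := 35 / 108 * k) (by norm_num)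
    (by linarith)
  have h₃ := pow_le_pow_left₀ (by positivity) h 3
  simp only [mul_pow, ← exp_nat_mul] at h₃
  have e₁ : ((3 : ℕ) : ℝ) * -(35 / 108 * k) = -(35 / 36 * k) := by push_cast; ring
  have e₂ : ((3 : ℕ) : ℝ) * -(35 / 27) = -(35 / 9) := by push_cast; ring
  rw [e₁, e₂] at h₃
  nlinarith

lemma thirtyFive_div_thirtySix_mul_le {k c : ℝ} (hk : 4 ≤ k)
    (hc : k * (1 - 3 / 2 * exp (-k)) ≤ c) : 35 / 36 * k ≤ c := by
  have h : exp (-k) ≤ 1 / 54 := by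
    rw [exp_neg, inv_le_comm₀ (exp_pos _) (by norm_num)]
    simpa using fiftyFour_le_exp_four.trans (exp_le_exp.2 hk)
  nlinarith

lemma mul_mul_exp_neg_le_two_div {k c : ℝ} (hk : 4 ≤ k)
    (hc : k * (1 - 3 / 2 * exp (-k)) ≤ c) : 3 * k / 2 * (c * exp (-c)) ≤ 2 / k := by
  have hce := mul_exp_neg_le_mul_exp_neg (by linarith) (thirtyFive_div_thirtySix_mul_le hk hc)
  have h48 : exp (-(35 / 9)) ≤ 1 / 48 := by
    rw [exp_neg, inv_le_comm₀ (exp_pos _) (by norm_num)]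
    simpa using fortyEight_le_exp_thirtyFive_div_nine
  rw [le_div_iff₀ (by linarith)]
  calc 3 * k / 2 * (c * exp (-c)) * k
      ≤ 3 * k / 2 * (35 / 36 * k * exp (-(35 / 36 * k))) * k := by gcongr
    _ = 35 / 24 * (k ^ 3 * exp (-(35 / 36 * k))) := by ring
    _ ≤ 2 := by nlinarith [cube_mul_exp_neg_le hk]

lemma exp_le_div_sub_two {k B : ℝ} (hk : 2 < k) (hB₀ : 0 ≤ B) (hB : B ≤ 2 / k) :
    exp B ≤ k / (k - 2) := by
  have h₂ : 2 / k < 1 := by rw [div_lt_one (by linarith)]; exact hk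
  calc exp B ≤ 1 / (1 - B) := exp_bound_div_one_sub_of_interval hB₀ (by linarith)
    _ ≤ 1 / (1 - 2 / k) := by gcongr
    _ = k / (k - 2) := by field_simp

lemma sub_one_mul_exp_le {k c : ℝ} (hk : 4 ≤ k) (hc : 0 ≤ c)
    (hB : 3 * k / 2 * (c * exp (-c)) ≤ 2 / k) :
    (k - 1) * exp (-c * (1 - 3 * k / 2 * exp (-c))) ≤ 3 * k / 2 * exp (-c) := by
  have hsplit : exp (-c * (1 - 3 * k / 2 * exp (-c))) =
      exp (-c) * exp (3 * k / 2 * (c * exp (-c))) := by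
    rw [← exp_add]; ring_nf
  have hB₀ : 0 ≤ 3 * k / 2 * (c * exp (-c)) :=
    mul_nonneg (by linarith) (mul_nonneg hc (exp_pos _).le)
  have hk' : (k - 1) / (k - 2) ≤ 3 / 2 := by rw [div_le_iff₀ (by linarith)]; linarith
  rw [hsplit]
  calc (k - 1) * (exp (-c) * exp (3 * k / 2 * (c * exp (-c))))
      ≤ (k - 1) * (exp (-c) * (k / (k - 2))) := by
        gcongr
        · linarith
        · exact exp_le_div_sub_two (by linarith) hB₀ hB
    _ = (k - 1) / (k - 2) * (k * exp (-c)) := by ring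
    _ ≤ 3 / 2 * (k * exp (-c)) := by gcongr
    _ = 3 * k / 2 * exp (-c) := by ring

lemma exists_mem_Icc_apply_eq_self {f : ℝ → ℝ} {a b : ℝ} (hab : a ≤ b)
    (hf : ContinuousOn f (Icc a b)) (ha : a ≤ f a) (hb : f b ≤ b) : ∃ z ∈ Icc a b, f z = z := by
  obtain ⟨z, hz, hfz⟩ := intermediate_value_Icc' hab (hf.sub continuousOn_id)
    (show (0 : ℝ) ∈ Icc (f b - b) (f a - a) from ⟨by linarith, by linarith⟩)
  exact ⟨z, hz, sub_eq_zero.1 hfz⟩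

lemma le_one_sub_exp_neg_mul_pow {k : ℕ} (hk : 4 ≤ k) {c : ℝ}
    (hc : (k : ℝ) * (1 - 3 / 2 * exp (-(k : ℝ))) ≤ c) (ht : 0 ≤ 1 - 3 * k / 2 * exp (-c)) :
    1 - 3 * k / 2 * exp (-c) ≤ (1 - exp (-c * (1 - 3 * k / 2 * exp (-c)))) ^ (k - 1) := by
  have hK : (4 : ℝ) ≤ k := by exact_mod_cast hk
  have hc₀ : 0 ≤ c := by linarith [thirtyFive_div_thirtySix_mul_le hK hc]
  have hbound := sub_one_mul_exp_le hK hc₀ (mul_mul_exp_neg_le_two_div hK hc)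
  have hexp_le : exp (-c * (1 - 3 * k / 2 * exp (-c))) ≤ 1 := exp_le_one_iff.2 (by nlinarith)
  have hbern := one_add_mul_le_pow (a := -exp (-c * (1 - 3 * k / 2 * exp (-c))))
    (by linarith) (k - 1)
  rw [← sub_eq_add_neg, Nat.cast_sub (by omega), Nat.cast_one] at hbern
  linarith

theorem largest_fixed_point_lower_bound_general (k : ℕ) (hk : 4 ≤ k) (c : ℝ)
    (hc : (k:ℝ) * (1 - (3/2) * Real.exp (-(k:ℝ))) ≤ c) (x : ℝ)
    (hx : IsGreatest {y ∈ Icc (0:ℝ) 1 | y = (1 - Real.exp (-c * y)) ^ (k - 1)} x) :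
    1 - (3 * (k:ℝ) / 2) * Real.exp (-c) ≤ x := by
  set t := 1 - 3 * (k : ℝ) / 2 * exp (-c)
  rcases le_or_gt t 0 with ht | ht
  · exact ht.trans hx.1.1.1
  have hc₀ : 0 ≤ c := by
    linarith [thirtyFive_div_thirtySix_mul_le (by exact_mod_cast hk : (4 : ℝ) ≤ k) hc]
  have ht₁ : t ≤ 1 := by simp only [t]; nlinarith [exp_pos (-c)]
  have hf₁ : (1 - exp (-c * 1)) ^ (k - 1) ≤ 1 :=
    pow_le_one₀ (by linarith [exp_le_one_iff.2 (by linarith : -c * 1 ≤ 0)])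
      (by linarith [exp_pos (-c * 1)])
  obtain ⟨z, hz, hfz⟩ := exists_mem_Icc_apply_eq_self (f := fun y ↦ (1 - exp (-c * y)) ^ (k - 1))
    ht₁ (by fun_prop) (le_one_sub_exp_neg_mul_pow hk hc ht.le) hf₁
  exact hz.1.trans (hx.2 ⟨⟨ht.le.trans hz.1, hz.2⟩, hfz.symm⟩)

/-- For `k ≥ 4` and `c ≥ k(1 - (3/2)e^{-k})`, if `x` is the largest solution in `[0,1]`
of `x = (1 - e^{-cx})^{k-1}` and `x > 0`, then `x ≥ 1 - (3k/2) e^{-c}`. -/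
theorem largest_fixed_point_lower_bound (k : ℕ) (hk : 4 ≤ k) (c : ℝ)
    (hc : (k:ℝ) * (1 - (3/2) * Real.exp (-(k:ℝ))) ≤ c) (x : ℝ)
    (hx : IsGreatest {y ∈ Icc (0:ℝ) 1 | y = (1 - Real.exp (-c * y)) ^ (k - 1)} x)
    (hxpos : 0 < x) :
    1 - (3 * (k:ℝ) / 2) * Real.exp (-c) ≤ x :=
  largest_fixed_point_lower_bound_general k hk c hc x hx
end

section
/- Let k ≥ 4 be an integer. Writing ε = 1 - x where x ∈ (0,1) satisfies x = (1 - e^{-cx})^{k-1} with c ≥ k(1 - (3/2)e^{-k}), one has ε ≤ (k-1) e^{-c + cε}; in particular, since cε < 1, it follows that ε ≤ (k-1)e^{-c+1}. -/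
open Real Set

/-! Bernoulli's inequality applied to `x = (1 - δ)^(k-1)`, `δ = e^{-cx} = e^{-c+cε}`, gives
`ε = 1 - x ≤ (k-1) δ`; then `cε ≤ 1` bounds `δ` by `e^{-c+1}`. -/

lemma one_sub_one_sub_pow_le_mul {R : Type*} [Ring R] [LinearOrder R] [IsStrictOrderedRing R]
    {δ : R} (hδ : δ ≤ 2) (n : ℕ) : 1 - (1 - δ) ^ n ≤ n * δ := by
  have bernoulli := one_add_mul_le_pow (neg_le_neg hδ) n
  rw [← sub_eq_add_neg, mul_neg, ← sub_eq_add_neg] at bernoulli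
  exact sub_le_comm.mp bernoulli

theorem epsilon_bound_general (k : ℕ) (c : ℝ)
    (x : ℝ) (hx : x ∈ Ioo (0:ℝ) 1)
    (hfix : x = (1 - Real.exp (-c * x)) ^ (k - 1))
    (hεc : 1 - x ≤ 1 / c) :
    1 - x ≤ ((k:ℝ) - 1) * Real.exp (-c + c * (1 - x)) ∧
    1 - x ≤ ((k:ℝ) - 1) * Real.exp (-c + 1) := by
  obtain ⟨hx0, hx1⟩ := hx
  have hc : 0 < c := one_div_pos.mp (by linarith)
  have hk : 1 ≤ k := by
    by_contra! hk
    rw [Nat.sub_eq_zero_of_le hk.le, pow_zero] at hfix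
    linarith
  have hexp : Real.exp (-c * x) = Real.exp (-c + c * (1 - x)) := by ring_nf
  have hkey : 1 - x ≤ ((k:ℝ) - 1) * Real.exp (-c + c * (1 - x)) := by
    have hδ : Real.exp (-c * x) ≤ 2 :=
      (Real.exp_le_one_iff.mpr (by nlinarith)).trans one_le_two
    have bernoulli := one_sub_one_sub_pow_le_mul hδ (k - 1)
    rwa [← hfix, hexp, Nat.cast_sub hk, Nat.cast_one] at bernoulli
  have hcε : c * (1 - x) ≤ 1 := by
    calc c * (1 - x) ≤ c * (1 / c) := mul_le_mul_of_nonneg_left hεc hc.le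
      _ = 1 := mul_one_div_cancel hc.ne'
  refine ⟨hkey, hkey.trans ?_⟩
  gcongr
  exact sub_nonneg.mpr (by exact_mod_cast hk)

/-- Let `k ≥ 4`, `c ≥ k(1 - (3/2)e^{-k})`, and `x ∈ (0,1)` with
`x = (1 - e^{-cx})^{k-1}`. Writing `ε = 1 - x` and assuming `ε ≤ 1/c`, one has
`ε ≤ (k-1) e^{-c + cε}`, and consequently `ε ≤ (k-1) e^{-c+1}`. -/
theorem epsilon_bound (k : ℕ) (hk : 4 ≤ k) (c : ℝ)
    (hc : (k:ℝ) * (1 - (3/2) * Real.exp (-(k:ℝ))) ≤ c)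
    (x : ℝ) (hx : x ∈ Ioo (0:ℝ) 1)
    (hfix : x = (1 - Real.exp (-c * x)) ^ (k - 1))
    (hεc : 1 - x ≤ 1 / c) :
    1 - x ≤ ((k:ℝ) - 1) * Real.exp (-c + c * (1 - x)) ∧
    1 - x ≤ ((k:ℝ) - 1) * Real.exp (-c + 1) :=
  epsilon_bound_general k c x hx hfix hεc
end

section
/- Let k ≥ 4 and θ = 3/2. Define f(δ) = δ/(k - (k-1)δ) - e^{-k(1-δ)}. Then f(0) < 0 and f(θ k e^{-k}) > 0, hence f has a zero δ ∈ (0, θ k e^{-k}). -/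
/-!
Write `x = (3/2) c e^{-c}`. Positivity of `f(x)` amounts to `e^{cx} (c - (c-1)x) < (3/2) c`.
Bounding `1 - (c-1)x/c ≤ e^{-(c-1)x/c}` reduces this to `e^s < 3/2` with
`s = (3/2)(c² - c + 1) e^{-c}`. The function `(t² - t + 1) e^{-t}` decreases on `[2, ∞)`, so
`s ≤ (39/2) e^{-4} < 2/5 < log (3/2)`. The zero then comes from the intermediate value theorem,
the denominator `c - (c-1)δ` staying `≥ 1` on `[0, x]`.
-/

open Real Set

lemma hasDerivAt_quad_mul_exp_neg (t : ℝ) :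
    HasDerivAt (fun t => (t ^ 2 - t + 1) * exp (-t)) (-((t - 1) * (t - 2)) * exp (-t)) t := by
  refine ((((hasDerivAt_id' t).fun_pow 2).fun_sub (hasDerivAt_id' t)).add_const 1).fun_mul
    (hasDerivAt_neg t).exp |>.congr_deriv ?_
  push_cast
  ring

lemma antitoneOn_quad_mul_exp_neg :
    AntitoneOn (fun t : ℝ => (t ^ 2 - t + 1) * exp (-t)) (Ici 2) := by
  refine antitoneOn_of_deriv_nonpos (convex_Ici 2) (by fun_prop) (by fun_prop) fun t ht => ?_
  rw [interior_Ici, mem_Ioi] at ht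
  rw [(hasDerivAt_quad_mul_exp_neg t).deriv]
  have : 0 ≤ (t - 1) * (t - 2) := mul_nonneg (by linarith) (by linarith)
  have := exp_pos (-t)
  nlinarith

lemma exp_two_fifths_lt : exp (2 / 5) < 3 / 2 := by
  have h : exp (2 / 5) ^ 5 < (3 / 2) ^ 5 := by
    have := exp_one_lt_d9
    calc exp (2 / 5) ^ 5 = exp 1 ^ 2 := by rw [← exp_nat_mul, ← exp_nat_mul]; norm_num
      _ < 2.7182818286 ^ 2 := by gcongr
      _ < (3 / 2) ^ 5 := by norm_num
  exact lt_of_pow_lt_pow_left₀ 5 (by norm_num) h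

lemma thirteen_mul_exp_neg_four_lt : 3 / 2 * (13 * exp (-4)) < 2 / 5 := by
  have h : 48.75 < exp 4 := by
    have := exp_one_gt_d9
    calc (48.75 : ℝ) < 2.7182818283 ^ 4 := by norm_num
      _ < exp 1 ^ 4 := by gcongr
      _ = exp 4 := by rw [← exp_nat_mul]; norm_num
  rw [exp_neg, ← div_eq_mul_inv, mul_div_assoc', div_lt_iff₀ (exp_pos 4)]
  linarith

section

variable {c : ℝ}

lemma three_halves_quad_mul_exp_neg_lt (hc : 4 ≤ c) :
    3 / 2 * ((c ^ 2 - c + 1) * exp (-c)) < 2 / 5 := by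
  have := antitoneOn_quad_mul_exp_neg (by norm_num : (4 : ℝ) ∈ Ici 2)
    (show c ∈ Ici 2 from (by norm_num : (2 : ℝ) ≤ 4).trans hc) hc
  norm_num at this
  linarith [thirteen_mul_exp_neg_four_lt]

lemma three_halves_mul_exp_neg_le_one (hc : 4 ≤ c) : 3 / 2 * c * exp (-c) ≤ 1 := by
  have : c ≤ c ^ 2 - c + 1 := by nlinarith
  have := mul_le_mul_of_nonneg_right this (exp_pos (-c)).le
  linarith [three_halves_quad_mul_exp_neg_lt hc]

lemma exp_mul_sub_le (hc : 0 < c) (x : ℝ) :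
    exp (-c * (1 - x)) * (c - (c - 1) * x) ≤ c * exp (-c) * exp ((c ^ 2 - c + 1) / c * x) := by
  have hlin : c - (c - 1) * x ≤ c * exp (-((c - 1) / c * x)) := by
    have := add_one_le_exp (-((c - 1) / c * x))
    calc c - (c - 1) * x = c * (-((c - 1) / c * x) + 1) := by field_simp; ring
      _ ≤ _ := by gcongr
  calc exp (-c * (1 - x)) * (c - (c - 1) * x)
      ≤ exp (-c * (1 - x)) * (c * exp (-((c - 1) / c * x))) := by gcongr
    _ = c * exp (-c) * exp ((c ^ 2 - c + 1) / c * x) := by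
      rw [mul_left_comm, ← exp_add, mul_assoc, ← exp_add]
      congr 2
      field_simp
      ring

/-- A zero `δ` gives the fixed point `y = 1 - δ / (c - (c - 1) δ)` of
`y = 1 - exp (-c y / (c - (c - 1) y))`. -/
noncomputable def fixedPointDefect (c δ : ℝ) : ℝ := δ / (c - (c - 1) * δ) - exp (-c * (1 - δ))

lemma one_le_sub_mul {δ : ℝ} (hc : 1 ≤ c) (hδ : δ ≤ 1) : 1 ≤ c - (c - 1) * δ := by
  nlinarith

lemma continuousOn_fixedPointDefect (hc : 1 ≤ c) : ContinuousOn (fixedPointDefect c) (Iic 1) :=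
  (continuousOn_id.div (by fun_prop) fun _ hδ =>
    (one_le_sub_mul hc hδ).trans_lt' one_pos |>.ne').sub (by fun_prop)

lemma fixedPointDefect_zero (c : ℝ) : fixedPointDefect c 0 < 0 := by
  simp [fixedPointDefect, exp_pos]

lemma fixedPointDefect_pos (hc : 4 ≤ c) : 0 < fixedPointDefect c (3 / 2 * c * exp (-c)) := by
  set x := 3 / 2 * c * exp (-c)
  have hc0 : 0 < c := by linarith
  have hs : (c ^ 2 - c + 1) / c * x < 2 / 5 := by
    have : (c ^ 2 - c + 1) / c * x = 3 / 2 * ((c ^ 2 - c + 1) * exp (-c)) := by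
      simp only [x]; field_simp
    exact this ▸ three_halves_quad_mul_exp_neg_lt hc
  have hD : 1 ≤ c - (c - 1) * x := one_le_sub_mul (by linarith) (three_halves_mul_exp_neg_le_one hc)
  rw [fixedPointDefect, sub_pos, lt_div_iff₀ (by linarith)]
  calc exp (-c * (1 - x)) * (c - (c - 1) * x)
      ≤ c * exp (-c) * exp ((c ^ 2 - c + 1) / c * x) := exp_mul_sub_le hc0 x
    _ < c * exp (-c) * (3 / 2) := by
      gcongr
      exact (exp_lt_exp.2 hs).trans exp_two_fifths_lt
    _ = x := by ring

end

/-- Let `k ≥ 4` and `θ = 3/2`. For `f(δ) = δ/(k - (k-1)δ) - e^{-k(1-δ)}` one has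
`f(0) < 0` and `f(θ k e^{-k}) > 0`, hence `f` has a zero in `(0, θ k e^{-k})`. -/
theorem zero_of_f (k : ℕ) (hk : 4 ≤ k) :
    letI f : ℝ → ℝ := fun δ => δ / ((k:ℝ) - ((k:ℝ) - 1) * δ) - Real.exp (-(k:ℝ) * (1 - δ))
    f 0 < 0 ∧ 0 < f ((3/2) * (k:ℝ) * Real.exp (-(k:ℝ))) ∧
      ∃ δ ∈ Ioo (0:ℝ) ((3/2) * (k:ℝ) * Real.exp (-(k:ℝ))), f δ = 0 := by
  show fixedPointDefect k 0 < 0 ∧ 0 < fixedPointDefect k _ ∧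
    ∃ δ ∈ Ioo (0:ℝ) _, fixedPointDefect k δ = 0
  have hc : (4 : ℝ) ≤ k := by exact_mod_cast hk
  have hneg := fixedPointDefect_zero k
  have hpos := fixedPointDefect_pos hc
  have hcont : ContinuousOn (fixedPointDefect k) (Icc 0 (3 / 2 * k * exp (-k))) :=
    (continuousOn_fixedPointDefect (by linarith)).mono
      (Icc_subset_Iic_self.trans (Iic_subset_Iic.2 (three_halves_mul_exp_neg_le_one hc)))
  exact ⟨hneg, hpos, intermediate_value_Ioo (by positivity) hcont ⟨hneg, hpos⟩⟩
end

section
/- Let B be a minimum weight basis (maximal independent set of full rank n*) of a finite collection of GF(2) vectors with weights X_c ∈ [0,1], constructed greedily by increasing weight. Then the total weight satisfies Σ_{c∈B} X_c = ∫_0^1 (n* - rank(A_p)) dp, where A_p is the matrix whose columns are all vectors c with X_c ≤ p and n* = rank of the whole collection. -/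
/-!
The greedy rule makes `B` linearly independent and puts every `c i` in the span of the elements
of `B` up to `i`. Hence, for every down-set `S` of indices, `c '' S` has rank `#(S ∩ B)`; since `X`
is monotone, `{i | X i ≤ p}` is such a down-set, so `n* - rank A_p` counts the `i ∈ B` with
`p < X i`. Integrating this count over `p ∈ [0, 1]` returns each `X i` with `i ∈ B` exactly once.
-/

open Set Submodule MeasureTheory
open scoped Finset

section GreedyBasis

variable {ι K V : Type*} [LinearOrder ι] [DivisionRing K] [AddCommGroup V] [Module K V]

/-- The indices kept when scanning `c` in increasing order and keeping `c i` exactly when it is not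
spanned by the vectors kept before it. -/
def IsGreedyBasis (K : Type*) [DivisionRing K] [Module K V] (c : ι → V) (B : Finset ι) : Prop :=
  ∀ i, i ∈ B ↔ c i ∉ span K (c '' {j | j ∈ B ∧ j < i})

variable {c : ι → V} {B : Finset ι}

theorem IsGreedyBasis.linearIndepOn (hB : IsGreedyBasis K c B) :
    LinearIndepOn K c (B : Set ι) := by
  suffices ∀ t : Finset ι, t ⊆ B → LinearIndepOn K c (t : Set ι) from this B subset_rfl
  intro t
  induction t using Finset.induction_on_max with
  | empty => simp
  | insert a t hlt ih =>
    intro hsub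
    have ht : (t : Set ι) ⊆ {j | j ∈ B ∧ j < a} := fun j hj =>
      ⟨hsub (Finset.mem_insert_of_mem hj), hlt j hj⟩
    rw [Finset.coe_insert]
    exact (ih ((Finset.subset_insert a t).trans hsub)).insert fun hspan =>
      (hB a).1 (hsub (Finset.mem_insert_self a t)) (span_mono (image_mono ht) hspan)

theorem IsGreedyBasis.mem_span_image_le (hB : IsGreedyBasis K c B) (i : ι) :
    c i ∈ span K (c '' {j | j ∈ B ∧ j ≤ i}) := by
  by_cases hi : i ∈ B
  · exact subset_span ⟨i, ⟨hi, le_rfl⟩, rfl⟩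
  · have hlt : {j | j ∈ B ∧ j < i} ⊆ {j | j ∈ B ∧ j ≤ i} := fun j hj => ⟨hj.1, hj.2.le⟩
    exact span_mono (image_mono hlt) (not_not.1 (mt (hB i).2 hi))

theorem IsGreedyBasis.span_image_inter (hB : IsGreedyBasis K c B) {S : Set ι}
    (hS : IsLowerSet S) : span K (c '' (S ∩ B)) = span K (c '' S) := by
  refine le_antisymm (span_mono (image_mono inter_subset_left)) (span_le.2 ?_)
  rintro _ ⟨i, hi, rfl⟩
  have hle : {j | j ∈ B ∧ j ≤ i} ⊆ S ∩ B := fun j hj => ⟨hS hj.2 hi, hj.1⟩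
  exact span_mono (image_mono hle) (hB.mem_span_image_le i)

theorem IsGreedyBasis.finrank_span_image (hB : IsGreedyBasis K c B) {S : Set ι}
    (hS : IsLowerSet S) [DecidablePred (· ∈ S)] :
    Module.finrank K (span K (c '' S)) = #{i ∈ B | i ∈ S} := by
  have hli : LinearIndepOn K c (({i ∈ B | i ∈ S} : Finset ι) : Set ι) :=
    hB.linearIndepOn.mono (Finset.filter_subset _ _)
  have hS_inter : S ∩ B = (({i ∈ B | i ∈ S} : Finset ι) : Set ι) := by
    ext; simp [and_comm]
  rw [← hB.span_image_inter hS, hS_inter, image_eq_range, finrank_span_eq_card hli]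
  simp

end GreedyBasis

theorem Finset.card_sub_card_filter_le_eq_sum_indicator {α : Type*} (s : Finset α) (f : α → ℝ)
    (p : ℝ) : (#s : ℝ) - #{i ∈ s | f i ≤ p} = ∑ i ∈ s, (Set.Iio (f i)).indicator 1 p := by
  rw [← Finset.card_filter_add_card_filter_not (fun i => f i ≤ p)]
  simp [indicator_apply, Finset.sum_boole]

theorem intervalIntegral_indicator_Iio_one {a b : ℝ} (ha : 0 ≤ a) (hab : a ≤ b) :
    ∫ p in (0 : ℝ)..b, (Iio a).indicator 1 p = a := by
  rw [intervalIntegral.integral_of_le (ha.trans hab),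
    integral_indicator_one measurableSet_Iio]
  simp only [Measure.real, Measure.restrict_apply measurableSet_Iio]
  have hIoo : Iio a ∩ Ioc 0 b = Ioo 0 a := by
    ext p
    simp only [mem_inter_iff, mem_Iio, mem_Ioc, mem_Ioo]
    constructor
    · rintro ⟨hpa, hp0, -⟩
      exact ⟨hp0, hpa⟩
    · rintro ⟨hp0, hpa⟩
      exact ⟨hpa, hp0, hpa.le.trans hab⟩
  rw [hIoo, Real.volume_Ioo, sub_zero, ENNReal.toReal_ofReal ha]

theorem Finset.sum_eq_intervalIntegral_sum_indicator_Iio {α : Type*} (s : Finset α) {f : α → ℝ}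
    {b : ℝ} (hf : ∀ i ∈ s, f i ∈ Set.Icc 0 b) :
    ∑ i ∈ s, f i = ∫ p in (0 : ℝ)..b, ∑ i ∈ s, (Set.Iio (f i)).indicator 1 p := by
  have h_one : IntervalIntegrable (1 : ℝ → ℝ) volume 0 b := intervalIntegrable_const
  rw [intervalIntegral.integral_finsetSum fun i _ =>
    ⟨h_one.1.indicator measurableSet_Iio, h_one.2.indicator measurableSet_Iio⟩]
  exact Finset.sum_congr rfl fun i hi =>
    (intervalIntegral_indicator_Iio_one (hf i hi).1 (hf i hi).2).symm

theorem min_weight_basis_integral_general {V : Type*} [AddCommGroup V] [Module (ZMod 2) V]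
    (N : ℕ) (c : Fin N → V) (X : Fin N → ℝ) (hmono : Monotone X)
    (hX : ∀ i, X i ∈ Icc (0:ℝ) 1)
    (B : Finset (Fin N))
    (hB : ∀ i, i ∈ B ↔ c i ∉ Submodule.span (ZMod 2) (c '' {j | j ∈ B ∧ j < i})) :
    ∑ i ∈ B, X i = ∫ p in (0:ℝ)..1,
      ((Module.finrank (ZMod 2) (Submodule.span (ZMod 2) (Set.range c)) : ℝ) -
        (Module.finrank (ZMod 2) (Submodule.span (ZMod 2) (c '' {i | X i ≤ p})) : ℝ)) := by
  classical
  have hgreedy : IsGreedyBasis (ZMod 2) c B := hB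
  rw [B.sum_eq_intervalIntegral_sum_indicator_Iio fun i _ => hX i]
  refine intervalIntegral.integral_congr fun p _ => ?_
  have hlower : IsLowerSet {i | X i ≤ p} := fun i j hji hi => (hmono hji).trans hi
  rw [← image_univ, hgreedy.finrank_span_image isLowerSet_univ, hgreedy.finrank_span_image hlower,
    ← B.card_sub_card_filter_le_eq_sum_indicator]
  simp

/-- Let `B` be the minimum weight basis of the collection `c : Fin N → V` of `GF(2)`
vectors with weights `X i ∈ [0,1]`, constructed greedily by increasing weight. Then
`Σ_{i ∈ B} X i = ∫_0^1 (n* - rank A_p) dp`, where `A_p` consists of the vectors of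
weight at most `p` and `n*` is the rank of the whole collection. -/
theorem min_weight_basis_integral {V : Type*} [AddCommGroup V] [Module (ZMod 2) V]
    [FiniteDimensional (ZMod 2) V]
    (N : ℕ) (c : Fin N → V) (X : Fin N → ℝ) (hmono : Monotone X)
    (hX : ∀ i, X i ∈ Icc (0:ℝ) 1)
    (B : Finset (Fin N))
    (hB : ∀ i, i ∈ B ↔ c i ∉ Submodule.span (ZMod 2) (c '' {j | j ∈ B ∧ j < i})) :
    ∑ i ∈ B, X i = ∫ p in (0:ℝ)..1,
      ((Module.finrank (ZMod 2) (Submodule.span (ZMod 2) (Set.range c)) : ℝ) -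
        (Module.finrank (ZMod 2) (Submodule.span (ZMod 2) (c '' {i | X i ≤ p})) : ℝ)) :=
  min_weight_basis_integral_general N c X hmono hX B hB
end
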